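/- Let W(·|x) = N(x, N·I_n) on ℝⁿ and q = N(0, (Γ + N)·I_n). Let X ~ P̄ for any Borel probability measure P̄ on ℝⁿ, and Y = X + Z with Z ~ N(0, N·I_n) independent of X. Then log(W(Y|X)/q(Y)) has the same distribution as n·C(Γ) + nS/(2Γ) − (Γ/(2(N+Γ)))·Σ_{i=1}^n (Z̃_i − √(NS)/Γ)², where S = ||X||²/n, the Z̃_i are i.i.d. standard normal independent of S, and C(Γ) = (1/2)·log(1 + Γ/N). -/

import Mathlib

/-!
Condition on `X = x` and write `Z = √N • u` with `u` standard Gaussian. The information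
density is then an affine function of `(⟪a, u⟫, ‖u‖²)` with `a = √N x / (N + Γ)`, and the
right-hand side is the same affine function of `(⟪b, ũ⟫, ‖ũ‖²)` with `b` the constant vector
`√(N S) / (N + Γ)`. As `‖a‖ = ‖b‖`, the reflection exchanging `a` and `b` preserves the
standard Gaussian, so the two pairs have the same law. Integrating over the law of `X`
(independent of `Z`), resp. of `S = ‖X‖² / n` (independent of `Z̃`), gives the claim.
-/

open MeasureTheory ProbabilityTheory Real
open scoped NNReal RealInnerProductSpace

section StdGaussian

variable {E : Type*} [NormedAddCommGroup E] [InnerProductSpace ℝ E] [FiniteDimensional ℝ E]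
  [MeasurableSpace E] [BorelSpace E]

lemma stdGaussian_map_inner_sq_norm_eq {a b : E} (hab : ‖a‖ = ‖b‖) :
    (stdGaussian E).map (fun u => (⟪a, u⟫, ‖u‖ ^ 2)) =
      (stdGaussian E).map (fun u => (⟪b, u⟫, ‖u‖ ^ 2)) := by
  set O := Submodule.reflection (ℝ ∙ (a - b))ᗮ
  have hOa : O a = b := Submodule.reflection_sub hab
  conv_rhs => rw [← stdGaussian_map O]
  rw [Measure.map_map (by fun_prop) O.continuous.measurable]
  congr 1
  funext u
  simp only [Function.comp_apply, ← hOa, O.inner_map_map, O.norm_map]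

end StdGaussian

lemma pi_gaussianReal_map_sum_mul_sum_sq_eq {ι : Type*} [Fintype ι] {a b : ι → ℝ}
    (hab : ∑ i, a i ^ 2 = ∑ i, b i ^ 2) :
    (Measure.pi fun _ : ι => gaussianReal 0 1).map
        (fun u => (∑ i, a i * u i, ∑ i, u i ^ 2)) =
      (Measure.pi fun _ : ι => gaussianReal 0 1).map
        (fun u => (∑ i, b i * u i, ∑ i, u i ^ 2)) := by
  have key (c : ι → ℝ) : (fun u : ι → ℝ => (∑ i, c i * u i, ∑ i, u i ^ 2)) =
      (fun v : EuclideanSpace ℝ ι => (⟪WithLp.toLp 2 c, v⟫, ‖v‖ ^ 2)) ∘ WithLp.toLp 2 := by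
    ext u <;> simp [PiLp.inner_apply, EuclideanSpace.real_norm_sq_eq, mul_comm]
  rw [key a, key b, ← Measure.map_map (by fun_prop) (by fun_prop),
    ← Measure.map_map (by fun_prop) (by fun_prop), map_pi_eq_stdGaussian]
  refine stdGaussian_map_inner_sq_norm_eq ?_
  simp [EuclideanSpace.norm_eq, hab]

lemma pi_gaussianReal_eq_map_const_mul {ι : Type*} [Fintype ι] (v : ℝ≥0) :
    Measure.pi (fun _ : ι => gaussianReal 0 v) =
      (Measure.pi fun _ : ι => gaussianReal 0 1).map (fun u i => √v * u i) := by
  rw [Measure.pi_map_pi (fun _ => by fun_prop), gaussianReal_map_const_mul]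
  congr
  ext
  simp

lemma MeasureTheory.Measure.map_uncurry_prod_eq_of_ae_map_eq {α β γ δ ε : Type*} [MeasurableSpace α]
    [MeasurableSpace β] [MeasurableSpace γ] [MeasurableSpace δ] [MeasurableSpace ε]
    {μ : Measure α} {ν : Measure β} {ν' : Measure γ} [SFinite ν] [SFinite ν'] {σ : α → δ}
    {f : α → β → ε} {g : δ → γ → ε} (hσ : Measurable σ)
    (hf : Measurable (Function.uncurry f)) (hg : Measurable (Function.uncurry g))
    (h : ∀ᵐ x ∂μ, ν.map (f x) = ν'.map (g (σ x))) :
    (μ.prod ν).map (Function.uncurry f) = ((μ.map σ).prod ν').map (Function.uncurry g) := by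
  ext s hs
  rw [Measure.map_apply hf hs, Measure.map_apply hg hs, Measure.prod_apply (hf hs),
    Measure.prod_apply (hg hs), lintegral_map (measurable_measure_prodMk_left (hg hs)) hσ]
  refine lintegral_congr_ae (h.mono fun x hx => ?_)
  have hxs := congrArg (· s) hx
  rwa [Measure.map_apply hf.of_uncurry_left hs, Measure.map_apply hg.of_uncurry_left hs]
    at hxs

lemma natCast_mul_sum_div_natCast {n : ℕ} (f : Fin n → ℝ) :
    (n : ℝ) * ((∑ i, f i) / n) = ∑ i, f i := by
  rcases n.eq_zero_or_pos with rfl | hn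
  · simp
  · exact mul_div_cancel₀ _ (by positivity)

lemma log_gaussianPDFReal (μ : ℝ) {v : ℝ≥0} (hv : v ≠ 0) (y : ℝ) :
    log (gaussianPDFReal μ v y) = -(1 / 2) * log (2 * π * v) - (y - μ) ^ 2 / (2 * v) := by
  rw [gaussianPDFReal_def, log_mul (by positivity) (exp_ne_zero _), log_inv, log_exp,
    log_sqrt (by positivity)]
  ring

namespace AWGN

variable {n : ℕ} (N Γ : ℝ≥0)

/-- `log (W(y|x) / q(y))` at `y = x + z`. -/
noncomputable def infoDensity (x z : Fin n → ℝ) : ℝ :=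
  log ((∏ i, gaussianPDFReal (x i) N (x i + z i)) /
    ∏ i, gaussianPDFReal 0 (Γ + N) (x i + z i))

noncomputable def infoDensityNormalForm (s : ℝ) (zt : Fin n → ℝ) : ℝ :=
  n * ((1 / 2) * log (1 + (Γ : ℝ) / N)) + n * s / (2 * Γ)
    - ((Γ : ℝ) / (2 * ((N : ℝ) + Γ))) * ∑ i, (zt i - √((N : ℝ) * s) / Γ) ^ 2

lemma measurable_infoDensity : Measurable (Function.uncurry (infoDensity (n := n) N Γ)) := by
  unfold infoDensity gaussianPDFReal
  fun_prop

lemma measurable_infoDensityNormalForm :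
    Measurable (Function.uncurry (infoDensityNormalForm (n := n) N Γ)) := by
  unfold infoDensityNormalForm
  fun_prop

variable {N Γ}

lemma infoDensity_eq (hN : N ≠ 0) (x z : Fin n → ℝ) :
    infoDensity N Γ x z = n * ((1 / 2) * log (1 + (Γ : ℝ) / N))
      + (∑ i, (x i + z i) ^ 2) / (2 * ((N : ℝ) + Γ)) - (∑ i, z i ^ 2) / (2 * N) := by
  have hNΓ : Γ + N ≠ 0 := by positivity
  have hpos (μ : ℝ) {v : ℝ≥0} (hv : v ≠ 0) (i : Fin n) :
      gaussianPDFReal μ v (x i + z i) ≠ 0 :=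
    (gaussianPDFReal_pos _ _ _ hv).ne'
  rw [infoDensity, log_div (Finset.prod_ne_zero_iff.2 fun i _ => hpos _ hN i)
      (Finset.prod_ne_zero_iff.2 fun i _ => hpos _ hNΓ i),
    log_prod (fun i _ => hpos _ hN i), log_prod (fun i _ => hpos _ hNΓ i)]
  simp only [log_gaussianPDFReal _ hN, log_gaussianPDFReal _ hNΓ, Finset.sum_sub_distrib,
    Finset.sum_const, Finset.card_univ, Fintype.card_fin, nsmul_eq_mul, ← Finset.sum_div,
    add_sub_cancel_left, sub_zero, NNReal.coe_add]
  rw [show 1 + (Γ : ℝ) / N = (2 * π * (Γ + N)) / (2 * π * N) by field_simp; ring,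
    log_div (by positivity) (by positivity)]
  ring

lemma map_infoDensity (hN : N ≠ 0) (hΓ : Γ ≠ 0) (x : Fin n → ℝ) :
    (Measure.pi fun _ : Fin n => gaussianReal 0 N).map (infoDensity N Γ x) =
      (Measure.pi fun _ : Fin n => gaussianReal 0 1).map
        (infoDensityNormalForm N Γ ((∑ i, x i ^ 2) / n)) := by
  set s := (∑ i, x i ^ 2) / n
  have hns : n * s = ∑ i, x i ^ 2 := natCast_mul_sum_div_natCast _
  have hsqN : √(N : ℝ) ^ 2 = N := sq_sqrt N.2
  have hsqNs : √((N : ℝ) * s) ^ 2 = N * s := sq_sqrt (by positivity)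
  let h : ℝ × ℝ → ℝ := fun p => n * ((1 / 2) * log (1 + (Γ : ℝ) / N))
    + n * s / (2 * ((N : ℝ) + Γ)) + p.1 - (Γ : ℝ) / (2 * ((N : ℝ) + Γ)) * p.2
  have hLHS : infoDensity N Γ x ∘ (fun u i => √(N : ℝ) * u i) =
      h ∘ fun u : Fin n → ℝ => (∑ i, √(N : ℝ) / (N + Γ) * x i * u i, ∑ i, u i ^ 2) := by
    funext u
    simp only [Function.comp_apply, infoDensity_eq hN, h, hns, add_sq, mul_pow, hsqN,
      Finset.sum_add_distrib, ← Finset.mul_sum]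
    have e1 : ∑ i, 2 * x i * (√(N : ℝ) * u i) = 2 * √(N : ℝ) * ∑ i, x i * u i := by
      rw [Finset.mul_sum]
      exact Finset.sum_congr rfl fun i _ => by ring
    have e2 : ∑ i, √(N : ℝ) / (N + Γ) * x i * u i =
        √(N : ℝ) / (N + Γ) * ∑ i, x i * u i := by
      rw [Finset.mul_sum]
      exact Finset.sum_congr rfl fun i _ => by ring
    rw [e1, e2, ← hns]
    field_simp
    ring
  have hRHS : infoDensityNormalForm N Γ s =
      h ∘ fun u : Fin n → ℝ => (∑ i, √((N : ℝ) * s) / (N + Γ) * u i, ∑ i, u i ^ 2) := by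
    funext u
    simp only [infoDensityNormalForm, Function.comp_apply, h, sub_sq, div_pow, hsqNs,
      Finset.sum_add_distrib, Finset.sum_sub_distrib, ← Finset.mul_sum, ← Finset.sum_mul,
      Finset.sum_const, Finset.card_univ, Fintype.card_fin, nsmul_eq_mul]
    field_simp
    ring
  have hnorm : ∑ i, (√(N : ℝ) / (N + Γ) * x i) ^ 2 =
      ∑ i : Fin n, (√((N : ℝ) * s) / (N + Γ)) ^ 2 := by
    simp only [mul_pow, div_pow, hsqN, hsqNs, ← Finset.mul_sum, ← hns, Finset.sum_const,
      Finset.card_univ, Fintype.card_fin, nsmul_eq_mul]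
    ring
  rw [pi_gaussianReal_eq_map_const_mul,
    Measure.map_map (measurable_infoDensity N Γ).of_uncurry_left (by fun_prop), hLHS, hRHS,
    ← Measure.map_map (by fun_prop) (by fun_prop), ← Measure.map_map (by fun_prop) (by fun_prop),
    pi_gaussianReal_map_sum_mul_sum_sq_eq hnorm]

end AWGN

theorem awgn_llr_distribution_eq_general
    (n : ℕ) (N Γ : ℝ≥0) (hN : 0 < N) (hΓ : 0 < Γ)
    (Ω : Type*) [MeasureSpace Ω] [IsProbabilityMeasure (ℙ : Measure Ω)]
    (X Z : Ω → (Fin n → ℝ)) (Zt : Ω → (Fin n → ℝ))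
    (hX : Measurable X) (hZ : Measurable Z) (hZt : Measurable Zt)
    (hlawZ : Measure.map Z ℙ = Measure.pi fun _ : Fin n => gaussianReal 0 N)
    (hindep : IndepFun X Z)
    (S : Ω → ℝ) (hS : ∀ ω, S ω = (∑ i, X ω i ^ 2) / n)
    (hjoint : Measure.map (fun ω => (S ω, Zt ω)) ℙ
      = (Measure.map S ℙ).prod (Measure.pi fun _ : Fin n => gaussianReal 0 1)) :
    Measure.map
      (fun ω => Real.log
        ((∏ i, gaussianPDFReal (X ω i) N (X ω i + Z ω i)) /
          ∏ i, gaussianPDFReal 0 (Γ + N) (X ω i + Z ω i))) ℙ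
    = Measure.map
      (fun ω => (n : ℝ) * ((1 / 2) * Real.log (1 + (Γ : ℝ) / N))
        + (n : ℝ) * S ω / (2 * Γ)
        - ((Γ : ℝ) / (2 * ((N : ℝ) + Γ)))
            * ∑ i, (Zt ω i - Real.sqrt ((N : ℝ) * S ω) / Γ) ^ 2) ℙ := by
  have hσ : Measurable fun x : Fin n → ℝ => (∑ i, x i ^ 2) / n := by fun_prop
  have hSX : S = (fun x : Fin n → ℝ => (∑ i, x i ^ 2) / n) ∘ X := funext hS
  have hlawXZ : Measure.map (fun ω => (X ω, Z ω)) ℙ =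
      (Measure.map X ℙ).prod (Measure.pi fun _ : Fin n => gaussianReal 0 N) := by
    rw [← hlawZ]
    exact (indepFun_iff_map_prod_eq_prod_map_map hX.aemeasurable hZ.aemeasurable).1 hindep
  have hSmeas : Measurable S := hSX ▸ hσ.comp hX
  calc _ = ((Measure.map X ℙ).prod (Measure.pi fun _ : Fin n => gaussianReal 0 N)).map
          (Function.uncurry (AWGN.infoDensity N Γ)) := by
        rw [← hlawXZ, Measure.map_map (AWGN.measurable_infoDensity N Γ) (hX.prodMk hZ)]
        rfl
    _ = ((Measure.map S ℙ).prod (Measure.pi fun _ : Fin n => gaussianReal 0 1)).map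
          (Function.uncurry (AWGN.infoDensityNormalForm N Γ)) := by
        rw [hSX, ← Measure.map_map hσ hX]
        exact Measure.map_uncurry_prod_eq_of_ae_map_eq hσ (AWGN.measurable_infoDensity N Γ)
          (AWGN.measurable_infoDensityNormalForm N Γ)
          (ae_of_all _ (AWGN.map_infoDensity hN.ne' hΓ.ne'))
    _ = _ := by
        rw [← hjoint,
          Measure.map_map (AWGN.measurable_infoDensityNormalForm N Γ) (hSmeas.prodMk hZt)]
        rfl

/-- For the AWGN channel `W(·|x) = N(x, N I_n)` on `ℝⁿ` and
`q = N(0, (Γ+N) I_n)`, with `X ~ P̄` arbitrary, `Z ~ N(0, N I_n)` independent of `X`,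
and `Y = X + Z`, the random variable `log (W(Y|X)/q(Y))` has the same law as
`n C(Γ) + n S/(2Γ) − (Γ/(2(N+Γ))) Σᵢ (Z̃ᵢ − √(N S)/Γ)²`, where `S = ‖X‖²/n` and
the `Z̃ᵢ` are i.i.d. standard normal independent of `S`. -/
theorem awgn_llr_distribution_eq
    (n : ℕ) (hn : 0 < n) (N Γ : ℝ≥0) (hN : 0 < N) (hΓ : 0 < Γ)
    (Ω : Type*) [MeasureSpace Ω] [IsProbabilityMeasure (ℙ : Measure Ω)]
    (X Z : Ω → (Fin n → ℝ)) (Zt : Ω → (Fin n → ℝ))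
    (hX : Measurable X) (hZ : Measurable Z) (hZt : Measurable Zt)
    (hlawZ : Measure.map Z ℙ = Measure.pi fun _ : Fin n => gaussianReal 0 N)
    (hindep : IndepFun X Z)
    (S : Ω → ℝ) (hS : ∀ ω, S ω = (∑ i, X ω i ^ 2) / n)
    (hjoint : Measure.map (fun ω => (S ω, Zt ω)) ℙ
      = (Measure.map S ℙ).prod (Measure.pi fun _ : Fin n => gaussianReal 0 1)) :
    Measure.map
      (fun ω => Real.log
        ((∏ i, gaussianPDFReal (X ω i) N (X ω i + Z ω i)) /
          ∏ i, gaussianPDFReal 0 (Γ + N) (X ω i + Z ω i))) ℙ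
    = Measure.map
      (fun ω => (n : ℝ) * ((1 / 2) * Real.log (1 + (Γ : ℝ) / N))
        + (n : ℝ) * S ω / (2 * Γ)
        - ((Γ : ℝ) / (2 * ((N : ℝ) + Γ)))
            * ∑ i, (Zt ω i - Real.sqrt ((N : ℝ) * S ω) / Γ) ^ 2) ℙ :=
  awgn_llr_distribution_eq_general n N Γ hN hΓ Ω X Z Zt hX hZ hZt hlawZ hindep S hS hjoint
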